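/- Let f : ℝⁿ × ℝᵐ → ℝⁿ and φ : ℝⁿ × ℝᵐ → ℝᵏ be continuously differentiable. Suppose q₀, q₁, p₀, p₁ ∈ ℝⁿ and internal stages Qⁱ, Pⁱ ∈ ℝⁿ, Uⁱ ∈ ℝᵐ, Λⁱ ∈ ℝᵏ (i = 1,…,s) satisfy the presymplectic partitioned Runge–Kutta equations: q₁ = q₀ + Δt·Σᵢ bᵢ f(Qⁱ,Uⁱ); Qⁱ = q₀ + Δt·Σⱼ aᵢⱼ f(Qʲ,Uʲ); p₁ = p₀ − Δt·Σᵢ bᵢ ( D_qf(Qⁱ,Uⁱ)ᵀ Pⁱ + D_qφ(Qⁱ,Uⁱ)ᵀ Λⁱ ); Pⁱ = p₀ − Δt·Σⱼ ãᵢⱼ ( D_qf(Qʲ,Uʲ)ᵀ Pʲ + D_qφ(Qʲ,Uʲ)ᵀ Λʲ ); 0 = φ(Qⁱ,Uⁱ); 0 = D_uf(Qⁱ,Uⁱ)ᵀ Pⁱ + D_uφ(Qⁱ,Uⁱ)ᵀ Λⁱ. Suppose further that δq₀, δq₁, δQⁱ ∈ ℝⁿ and δUⁱ ∈ ℝᵐ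 satisfy the discrete variational equations: δq₁ = δq₀ + Δt·Σᵢ bᵢ ( D_qf(Qⁱ,Uⁱ) δQⁱ + D_uf(Qⁱ,Uⁱ) δUⁱ ); δQⁱ = δq₀ + Δt·Σⱼ aᵢⱼ ( D_qf(Qʲ,Uʲ) δQʲ + D_uf(Qʲ,Uʲ) δUʲ ); 0 = D_qφ(Qⁱ,Uⁱ) δQⁱ + D_uφ(Qⁱ,Uⁱ) δUⁱ. Then ⟨p₁, δq₁⟩ = ⟨p₀, δq₀⟩. -/

import Mathlib

open scoped RealInnerProductSpace

noncomputable section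

abbrev Euc (n : ℕ) : Type := EuclideanSpace ℝ (Fin n)

/-- Partial Jacobian `D_qF(q,u)` with respect to the first argument. -/
noncomputable def Dq {n m k : ℕ} (F : Euc n × Euc m → Euc k) (q : Euc n) (u : Euc m) :
    Euc n →L[ℝ] Euc k :=
  fderiv ℝ (fun q' => F (q', u)) q

/-- Partial Jacobian `D_uF(q,u)` with respect to the second argument. -/
noncomputable def Du {n m k : ℕ} (F : Euc n × Euc m → Euc k) (q : Euc n) (u : Euc m) :
    Euc m →L[ℝ] Euc k :=
  fderiv ℝ (fun u' => F (q, u')) u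

/-- `D_qF(q,u)ᵀ`, the transpose (adjoint) of the partial Jacobian in `q`. -/
noncomputable def DqT {n m k : ℕ} (F : Euc n × Euc m → Euc k) (q : Euc n) (u : Euc m) :
    Euc k →L[ℝ] Euc n :=
  ContinuousLinearMap.adjoint (Dq F q u)

/-- `D_uF(q,u)ᵀ`, the transpose (adjoint) of the partial Jacobian in `u`. -/
noncomputable def DuT {n m k : ℕ} (F : Euc n × Euc m → Euc k) (q : Euc n) (u : Euc m) :
    Euc k →L[ℝ] Euc m :=
  ContinuousLinearMap.adjoint (Du F q u)

/-- Partial gradient `∇_qL(q,u)`. -/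
noncomputable def gradQ {n m : ℕ} (L : Euc n × Euc m → ℝ) (q : Euc n) (u : Euc m) : Euc n :=
  gradient (fun q' => L (q', u)) q

/-- Partial gradient `∇_uL(q,u)`. -/
noncomputable def gradU {n m : ℕ} (L : Euc n × Euc m → ℝ) (q : Euc n) (u : Euc m) : Euc m :=
  gradient (fun u' => L (q, u')) u

/-!
Only the linear structure of the scheme matters. At each stage, the adjoint equation
`D_ufᵀ P + D_uφᵀ Λ = 0` and the linearized constraint `D_qφ δQ + D_uφ δU = 0` make the
algebraic variables drop out of the pairing: `⟨P, δQ̇⟩ = ⟨-Ṗ, δQ⟩`, where `δQ̇ = D_qf δQ + D_uf δU`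
and `-Ṗ = D_qfᵀ P + D_qφᵀ Λ`. The classical argument for symplectic partitioned Runge–Kutta
methods then applies: expanding `⟨p₁, δq₁⟩` and substituting the stage equations, the terms of
order `Δt²` cancel precisely because `bᵢ ãᵢⱼ + bⱼ aⱼᵢ = bᵢ bⱼ`.
-/

open Finset InnerProduct

section LinearAlgebra

open ContinuousLinearMap

variable {E F K V : Type*}
  [NormedAddCommGroup E] [InnerProductSpace ℝ E] [CompleteSpace E]
  [NormedAddCommGroup F] [InnerProductSpace ℝ F] [CompleteSpace F]
  [NormedAddCommGroup K] [InnerProductSpace ℝ K] [CompleteSpace K]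
  [NormedAddCommGroup V] [InnerProductSpace ℝ V] [CompleteSpace V]

theorem inner_add_eq_inner_adjoint_add_of_eq_zero (A : E →L[ℝ] F) (B : V →L[ℝ] F)
    (C : E →L[ℝ] K) (D : V →L[ℝ] K) {p : F} {μ : K} {x : E} {u : V}
    (hadj : (B†) p + (D†) μ = 0) (hlin : C x + D u = 0) :
    ⟪p, A x + B u⟫ = ⟪(A†) p + (C†) μ, x⟫ := by
  have hB : ⟪p, B u⟫ = ⟪μ, C x⟫ := by
    rw [← adjoint_inner_left B, eq_neg_of_add_eq_zero_left hadj, inner_neg_left,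
      adjoint_inner_left, eq_neg_of_add_eq_zero_right hlin, inner_neg_right, neg_neg]
  rw [inner_add_right, inner_add_left, hB, adjoint_inner_left, adjoint_inner_left]

end LinearAlgebra

section SymplecticRK

variable {s : ℕ}

def SymplecticAdjoint (a a' : Fin s → Fin s → ℝ) (b : Fin s → ℝ) : Prop :=
  ∀ i j, b i * a' i j + b j * a j i = b i * b j

theorem SymplecticAdjoint.sum_mul_sum_eq {a a' : Fin s → Fin s → ℝ} {b : Fin s → ℝ}
    (hab : SymplecticAdjoint a a' b) (x : Fin s → Fin s → ℝ) :
    ∑ i, b i * ∑ j, (a' i j * x j i + a i j * x i j) = ∑ i, ∑ j, b i * b j * x i j := by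
  have hswap : ∑ i, ∑ j, b i * (a' i j * x j i) = ∑ i, ∑ j, b j * a' j i * x i j := by
    rw [sum_comm]
    simp only [mul_assoc]
  calc ∑ i, b i * ∑ j, (a' i j * x j i + a i j * x i j)
      = ∑ i, ∑ j, b i * (a' i j * x j i) + ∑ i, ∑ j, b i * (a i j * x i j) := by
        simp only [mul_sum, mul_add, sum_add_distrib]
    _ = ∑ i, ∑ j, (b j * a' j i + b i * a i j) * x i j := by
        rw [hswap, ← sum_add_distrib]
        refine sum_congr rfl fun i _ => ?_
        rw [← sum_add_distrib]
        exact sum_congr rfl fun j _ => by ring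
    _ = ∑ i, ∑ j, b i * b j * x i j := by
        simp only [hab _ _, mul_comm (b _) (b _)]

variable {E : Type*} [NormedAddCommGroup E] [InnerProductSpace ℝ E]

theorem SymplecticAdjoint.inner_step_eq {a a' : Fin s → Fin s → ℝ} {b : Fin s → ℝ}
    (hab : SymplecticAdjoint a a' b) {h : ℝ} {p₀ x₀ : E} {P X G V : Fin s → E}
    (hP : ∀ i, P i = p₀ - h • ∑ j, a' i j • G j)
    (hX : ∀ i, X i = x₀ + h • ∑ j, a i j • V j)
    (hstage : ∀ i, ⟪P i, V i⟫ = ⟪G i, X i⟫) :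
    ⟪p₀ - h • ∑ i, b i • G i, x₀ + h • ∑ i, b i • V i⟫ = ⟪p₀, x₀⟫ := by
  have hp₀ : ∀ i, ⟪p₀, V i⟫ = ⟪G i, X i⟫ + h * ∑ j, a' i j * ⟪G j, V i⟫ := by
    intro i
    rw [← hstage i, hP i]
    simp only [inner_sub_left, sum_inner, real_inner_smul_left]
    ring
  have hx₀ : ∀ i, ⟪G i, x₀⟫ = ⟪G i, X i⟫ - h * ∑ j, a i j * ⟪G i, V j⟫ := by
    intro i
    rw [hX i]
    simp only [inner_add_right, inner_sum, real_inner_smul_right]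
    ring
  have hexpand : ⟪p₀ - h • ∑ i, b i • G i, x₀ + h • ∑ i, b i • V i⟫
      = ⟪p₀, x₀⟫ + h * ∑ i, b i * (⟪p₀, V i⟫ - ⟪G i, x₀⟫)
        - h ^ 2 * ∑ i, ∑ j, b i * b j * ⟪G i, V j⟫ := by
    simp only [inner_sub_left, inner_add_right, real_inner_smul_left, real_inner_smul_right,
      sum_inner, inner_sum, mul_sub, sum_sub_distrib, mul_sum]
    rw [sum_comm (s := univ) (t := univ)]
    have hdouble : ∑ i, ∑ j, h * (b j * (h * (b i * ⟪G i, V j⟫)))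
        = ∑ i, ∑ j, h ^ 2 * (b i * b j * ⟪G i, V j⟫) :=
      sum_congr rfl fun _ _ => sum_congr rfl fun _ _ => by ring
    rw [hdouble]
    ring
  have hcross : ∑ i, b i * (⟪p₀, V i⟫ - ⟪G i, x₀⟫)
      = h * ∑ i, ∑ j, b i * b j * ⟪G i, V j⟫ := by
    rw [← hab.sum_mul_sum_eq, mul_sum]
    refine sum_congr rfl fun i _ => ?_
    rw [hp₀ i, hx₀ i, sum_add_distrib]
    ring
  rw [hexpand, hcross]
  ring

end SymplecticRK

theorem discrete_adjoint_DAE_quadratic_invariant_general {n m k s : ℕ}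
    (f : Euc n × Euc m → Euc n) (φ : Euc n × Euc m → Euc k)
    (Δt : ℝ)
    (a a' : Fin s → Fin s → ℝ) (b : Fin s → ℝ)
    (hsym : ∀ i j, b i * a' i j + b j * a j i = b i * b j)
    (p₀ p₁ : Euc n) (Q P : Fin s → Euc n) (U : Fin s → Euc m) (Λ : Fin s → Euc k)
    (hp1 : p₁ = p₀ - Δt • ∑ i, b i •
      (DqT f (Q i) (U i) (P i) + DqT φ (Q i) (U i) (Λ i)))
    (hP : ∀ i, P i = p₀ - Δt • ∑ j, a' i j •
      (DqT f (Q j) (U j) (P j) + DqT φ (Q j) (U j) (Λ j)))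
    (hadj : ∀ i, DuT f (Q i) (U i) (P i) + DuT φ (Q i) (U i) (Λ i) = 0)
    (δq₀ δq₁ : Euc n) (δQ : Fin s → Euc n) (δU : Fin s → Euc m)
    (hδq1 : δq₁ = δq₀ + Δt • ∑ i, b i •
      (Dq f (Q i) (U i) (δQ i) + Du f (Q i) (U i) (δU i)))
    (hδQ : ∀ i, δQ i = δq₀ + Δt • ∑ j, a i j •
      (Dq f (Q j) (U j) (δQ j) + Du f (Q j) (U j) (δU j)))
    (hδconstr : ∀ i, Dq φ (Q i) (U i) (δQ i) + Du φ (Q i) (U i) (δU i) = 0) :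
    ⟪p₁, δq₁⟫ = ⟪p₀, δq₀⟫ := by
  rw [hp1, hδq1]
  exact SymplecticAdjoint.inner_step_eq hsym hP hδQ fun i =>
    inner_add_eq_inner_adjoint_add_of_eq_zero _ _ _ _ (hadj i) (hδconstr i)

/-- the presymplectic partitioned Runge–Kutta discretization of the adjoint
DAE system preserves the discrete quadratic invariant: `⟨p₁, δq₁⟩ = ⟨p₀, δq₀⟩`. -/
theorem discrete_adjoint_DAE_quadratic_invariant {n m k s : ℕ} (hs : 1 ≤ s)
    (f : Euc n × Euc m → Euc n) (φ : Euc n × Euc m → Euc k)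
    (hf : ContDiff ℝ 1 f) (hφ : ContDiff ℝ 1 φ)
    (Δt : ℝ) (hΔt : 0 < Δt)
    (a a' : Fin s → Fin s → ℝ) (b : Fin s → ℝ)
    (hsym : ∀ i j, b i * a' i j + b j * a j i = b i * b j)
    (q₀ q₁ p₀ p₁ : Euc n) (Q P : Fin s → Euc n) (U : Fin s → Euc m) (Λ : Fin s → Euc k)
    (hq1 : q₁ = q₀ + Δt • ∑ i, b i • f (Q i, U i))
    (hQ : ∀ i, Q i = q₀ + Δt • ∑ j, a i j • f (Q j, U j))
    (hp1 : p₁ = p₀ - Δt • ∑ i, b i •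
      (DqT f (Q i) (U i) (P i) + DqT φ (Q i) (U i) (Λ i)))
    (hP : ∀ i, P i = p₀ - Δt • ∑ j, a' i j •
      (DqT f (Q j) (U j) (P j) + DqT φ (Q j) (U j) (Λ j)))
    (hconstr : ∀ i, φ (Q i, U i) = 0)
    (hadj : ∀ i, DuT f (Q i) (U i) (P i) + DuT φ (Q i) (U i) (Λ i) = 0)
    (δq₀ δq₁ : Euc n) (δQ : Fin s → Euc n) (δU : Fin s → Euc m)
    (hδq1 : δq₁ = δq₀ + Δt • ∑ i, b i •
      (Dq f (Q i) (U i) (δQ i) + Du f (Q i) (U i) (δU i)))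
    (hδQ : ∀ i, δQ i = δq₀ + Δt • ∑ j, a i j •
      (Dq f (Q j) (U j) (δQ j) + Du f (Q j) (U j) (δU j)))
    (hδconstr : ∀ i, Dq φ (Q i) (U i) (δQ i) + Du φ (Q i) (U i) (δU i) = 0) :
    ⟪p₁, δq₁⟫ = ⟪p₀, δq₀⟫ :=
  discrete_adjoint_DAE_quadratic_invariant_general f φ Δt a a' b hsym p₀ p₁ Q P U Λ hp1 hP hadj δq₀
    δq₁ δQ δU hδq1 hδQ hδconstr

end
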